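/- arXiv:1205.3300 — 5 statements merged into one kernel-verified Lean document; each statement's English description precedes it below -/
import Mathlib

section
/- The polynomial R(x) = x^6 + 2x^5 + 6x^4 + 5x^3 + 6x^2 + 2x + 1 has no root that is a root of unity. -/
open Polynomial

set_option maxRecDepth 10000 in
private lemma aux_totient : ∀ m ∈ Nat.divisors 2520, m.totient ≤ 6 → m ≤ 18 := by decide

theorem stmt_2 (z : ℂ) (h : ∃ n : ℕ, 0 < n ∧ z ^ n = 1) :
    z ^ 6 + 2 * z ^ 5 + 6 * z ^ 4 + 5 * z ^ 3 + 6 * z ^ 2 + 2 * z + 1 ≠ 0 := by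
  intro hz
  have hfin : IsOfFinOrder z := isOfFinOrder_iff_pow_eq_one.mpr (by
    obtain ⟨n, hn, hzn⟩ := h; exact ⟨n, hn, hzn⟩)
  have hdpos : 0 < orderOf z := hfin.orderOf_pos
  have hprim : IsPrimitiveRoot z (orderOf z) := IsPrimitiveRoot.orderOf z
  set d := orderOf z with hd_def
  have hd : z ^ d = 1 := pow_orderOf_eq_one z
  -- the rational polynomial
  set P : ℚ[X] := X ^ 6 + C 2 * X ^ 5 + C 6 * X ^ 4 + C 5 * X ^ 3 + C 6 * X ^ 2 + C 2 * X + 1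
    with hP_def
  have hPdeg : P.natDegree = 6 := by
    rw [hP_def]; compute_degree!
  have hP0 : P ≠ 0 := by
    intro h0; rw [h0] at hPdeg; simp at hPdeg
  have haeval : (aeval z) P = 0 := by
    rw [hP_def]
    simp only [map_add, map_mul, map_pow, map_one, aeval_X, aeval_C, map_ofNat]
    linear_combination hz
  have hdvdP : cyclotomic d ℚ ∣ P := by
    rw [cyclotomic_eq_minpoly_rat hprim hdpos]
    exact minpoly.dvd ℚ z haeval
  have htot : d.totient ≤ 6 := by
    have := Polynomial.natDegree_le_of_dvd hdvdP hP0
    rwa [natDegree_cyclotomic, hPdeg] at this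
  -- show d divides 2520
  have key : ∀ m : ℕ, m ∣ d → m.totient ≤ 6 :=
    fun m hm => le_trans
      (Nat.le_of_dvd (Nat.totient_pos.mpr hdpos) (Nat.totient_dvd_of_dvd hm)) htot
  have hdvd2520 : d ∣ 2520 := by
    rw [Nat.dvd_iff_prime_pow_dvd_dvd]
    intro p k hp hpk
    rcases Nat.eq_zero_or_pos k with rfl | hk
    · simp
    have hpp : Nat.Prime p := hp
    have hpd : p ∣ d := dvd_trans (dvd_trans (dvd_pow_self p hk.ne') hpk) dvd_rfl
    have hp7 : p ≤ 7 := by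
      have h1 := key p hpd
      rw [Nat.totient_prime hpp] at h1
      omega
    have h2 := hpp.two_le
    interval_cases p
    · -- p = 2
      have hk3 : k ≤ 3 := by
        by_contra hcon
        have hdd : (16:ℕ) ∣ d := by
          calc (16:ℕ) = 2 ^ 4 := by norm_num
          _ ∣ 2 ^ k := pow_dvd_pow 2 (by omega)
          _ ∣ d := hpk
        exact absurd (key 16 hdd) (by decide)
      exact dvd_trans (pow_dvd_pow 2 hk3) (by norm_num)
    · -- p = 3
      have hk2 : k ≤ 2 := by
        by_contra hcon
        have hdd : (27:ℕ) ∣ d := by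
          calc (27:ℕ) = 3 ^ 3 := by norm_num
          _ ∣ 3 ^ k := pow_dvd_pow 3 (by omega)
          _ ∣ d := hpk
        exact absurd (key 27 hdd) (by decide)
      exact dvd_trans (pow_dvd_pow 3 hk2) (by norm_num)
    · exact absurd hpp (by decide)
    · -- p = 5
      have hk1 : k ≤ 1 := by
        by_contra hcon
        have hdd : (25:ℕ) ∣ d := by
          calc (25:ℕ) = 5 ^ 2 := by norm_num
          _ ∣ 5 ^ k := pow_dvd_pow 5 (by omega)
          _ ∣ d := hpk
        exact absurd (key 25 hdd) (by decide)
      exact dvd_trans (pow_dvd_pow 5 hk1) (by norm_num)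
    · exact absurd hpp (by decide)
    · -- p = 7
      have hk1 : k ≤ 1 := by
        by_contra hcon
        have hdd : (49:ℕ) ∣ d := by
          calc (49:ℕ) = 7 ^ 2 := by norm_num
          _ ∣ 7 ^ k := pow_dvd_pow 7 (by omega)
          _ ∣ d := hpk
        exact absurd (key 49 hdd) (by decide)
      exact dvd_trans (pow_dvd_pow 7 hk1) (by norm_num)
  have hd18 : d ≤ 18 :=
    aux_totient d (Nat.mem_divisors.mpr ⟨hdvd2520, by norm_num⟩) htot
  have hd1 : 1 ≤ d := hdpos
  clear_value d
  clear hP_def hPdeg hP0 haeval hdvdP key hdvd2520 hprim hfin hd_def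
  interval_cases d
  · exact one_ne_zero (show (1:ℂ) = 0 by linear_combination ((1/23 : ℂ)) * hz + ((-22/23 : ℂ) + (-20/23 : ℂ) * z + (-14/23 : ℂ) * z ^ 2 + (-9/23 : ℂ) * z ^ 3 + (-3/23 : ℂ) * z ^ 4 + (-1/23 : ℂ) * z ^ 5) * hd)
  · exact one_ne_zero (show (1:ℂ) = 0 by linear_combination ((14/115 : ℂ) + (-9/115 : ℂ) * z) * hz + ((-101/115 : ℂ) + (19/115 : ℂ) * z + (-7/23 : ℂ) * z ^ 2 + (7/23 : ℂ) * z ^ 3 + (4/115 : ℂ) * z ^ 4 + (9/115 : ℂ) * z ^ 5) * hd)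
  · exact one_ne_zero (show (1:ℂ) = 0 by linear_combination ((-15/23 : ℂ) + (8/23 : ℂ) * z + (8/23 : ℂ) * z ^ 2) * hz + ((-38/23 : ℂ) + (-22/23 : ℂ) * z + (-66/23 : ℂ) * z ^ 2 + (-49/23 : ℂ) * z ^ 3 + (-24/23 : ℂ) * z ^ 4 + (-8/23 : ℂ) * z ^ 5) * hd)
  · exact one_ne_zero (show (1:ℂ) = 0 by linear_combination ((7/115 : ℂ) + (53/115 : ℂ) * z + (7/115 : ℂ) * z ^ 2 + (-62/115 : ℂ) * z ^ 3) * hz + ((-108/115 : ℂ) + (67/115 : ℂ) * z + (31/23 : ℂ) * z ^ 2 + (61/23 : ℂ) * z ^ 3 + (117/115 : ℂ) * z ^ 4 + (62/115 : ℂ) * z ^ 5) * hd)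
  · exact one_ne_zero (show (1:ℂ) = 0 by linear_combination ((-30/253 : ℂ) + (39/253 : ℂ) * z + (-7/253 : ℂ) * z ^ 2 + (39/253 : ℂ) * z ^ 3 + (-30/253 : ℂ) * z ^ 4) * hz + ((-283/253 : ℂ) + (-21/253 : ℂ) * z + (-109/253 : ℂ) * z ^ 2 + (109/253 : ℂ) * z ^ 3 + (21/253 : ℂ) * z ^ 4 + (30/253 : ℂ) * z ^ 5) * hd)
  · exact one_ne_zero (show (1:ℂ) = 0 by linear_combination ((-274/805 : ℂ) + (94/805 : ℂ) * z + (186/805 : ℂ) * z ^ 2 + (-251/805 : ℂ) * z ^ 3 + (186/805 : ℂ) * z ^ 4 + (94/805 : ℂ) * z ^ 5) * hz + ((-1079/805 : ℂ) + (-454/805 : ℂ) * z + (-254/161 : ℂ) * z ^ 2 + (-137/161 : ℂ) * z ^ 3 + (-374/805 : ℂ) * z ^ 4 + (-94/805 : ℂ) * z ^ 5) * hd)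
  · exact one_ne_zero (show (1:ℂ) = 0 by linear_combination ((-151/23 : ℂ) + (-151/23 : ℂ) * z + (217/23 : ℂ) * z ^ 2 + (56/23 : ℂ) * z ^ 3 + (-243/23 : ℂ) * z ^ 4 + (56/23 : ℂ) * z ^ 5 + (217/23 : ℂ) * z ^ 6) * hz + ((-174/23 : ℂ) + (-453/23 : ℂ) * z + (-991/23 : ℂ) * z ^ 2 + (-1171/23 : ℂ) * z ^ 3 + (-490/23 : ℂ) * z ^ 4 + (-217/23 : ℂ) * z ^ 5) * hd)
  · exact one_ne_zero (show (1:ℂ) = 0 by linear_combination ((-8/115 : ℂ) + (38/115 : ℂ) * z + (-8/115 : ℂ) * z ^ 2 + (-31/115 : ℂ) * z ^ 3 + (3/23 : ℂ) * z ^ 4 + (3/23 : ℂ) * z ^ 5 + (3/23 : ℂ) * z ^ 6 + (-31/115 : ℂ) * z ^ 7) * hz + ((-123/115 : ℂ) + (22/115 : ℂ) * z + (4/23 : ℂ) * z ^ 2 + (141/115 : ℂ) * z ^ 3 + (47/115 : ℂ) * z ^ 4 + (31/115 : ℂ) * z ^ 5) * hd)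
  · exact one_ne_zero (show (1:ℂ) = 0 by linear_combination ((-193/782 : ℂ) + (129/782 : ℂ) * z + (129/782 : ℂ) * z ^ 2 + (-193/782 : ℂ) * z ^ 3 + (-9/782 : ℂ) * z ^ 4 + (76/391 : ℂ) * z ^ 5 + (-62/391 : ℂ) * z ^ 6 + (76/391 : ℂ) * z ^ 7 + (-9/782 : ℂ) * z ^ 8) * hz + ((-975/782 : ℂ) + (-257/782 : ℂ) * z + (-771/782 : ℂ) * z ^ 2 + (-63/391 : ℂ) * z ^ 3 + (-67/391 : ℂ) * z ^ 4 + (9/782 : ℂ) * z ^ 5) * hd)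
  · exact one_ne_zero (show (1:ℂ) = 0 by linear_combination ((-3411/6325 : ℂ) + (-904/6325 : ℂ) * z + (3834/6325 : ℂ) * z ^ 2 + (-904/6325 : ℂ) * z ^ 3 + (-3411/6325 : ℂ) * z ^ 4 + (2661/6325 : ℂ) * z ^ 5 + (1879/6325 : ℂ) * z ^ 6 + (-4009/6325 : ℂ) * z ^ 7 + (1879/6325 : ℂ) * z ^ 8 + (2661/6325 : ℂ) * z ^ 9) * hz + ((-9736/6325 : ℂ) + (-7726/6325 : ℂ) * z + (-3688/1265 : ℂ) * z ^ 2 + (-3143/1265 : ℂ) * z ^ 3 + (-7201/6325 : ℂ) * z ^ 4 + (-2661/6325 : ℂ) * z ^ 5) * hd)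
  · exact absurd htot (by decide)
  · exact one_ne_zero (show (1:ℂ) = 0 by linear_combination ((-137/805 : ℂ) + (11628/47495 : ℂ) * z + (3072/47495 : ℂ) * z ^ 2 + (-13442/47495 : ℂ) * z ^ 3 + (3072/47495 : ℂ) * z ^ 4 + (11628/47495 : ℂ) * z ^ 5 + (-137/805 : ℂ) * z ^ 6 + (-6082/47495 : ℂ) * z ^ 7 + (7902/47495 : ℂ) * z ^ 8 + (-1367/47495 : ℂ) * z ^ 9 + (7902/47495 : ℂ) * z ^ 10 + (-6082/47495 : ℂ) * z ^ 11) * hz + ((-942/805 : ℂ) + (-4538/47495 : ℂ) * z + (-4434/9499 : ℂ) * z ^ 2 + (4411/9499 : ℂ) * z ^ 3 + (4262/47495 : ℂ) * z ^ 4 + (6082/47495 : ℂ) * z ^ 5) * hd)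
  · exact absurd htot (by decide)
  · exact one_ne_zero (show (1:ℂ) = 0 by linear_combination ((-32264/9545 : ℂ) + (-30401/9545 : ℂ) * z + (45361/9545 : ℂ) * z ^ 2 + (10769/9545 : ℂ) * z ^ 3 + (-49974/9545 : ℂ) * z ^ 4 + (10769/9545 : ℂ) * z ^ 5 + (45361/9545 : ℂ) * z ^ 6 + (-30401/9545 : ℂ) * z ^ 7 + (-32264/9545 : ℂ) * z ^ 8 + (44694/9545 : ℂ) * z ^ 9 + (12471/9545 : ℂ) * z ^ 10 + (-50871/9545 : ℂ) * z ^ 11 + (12471/9545 : ℂ) * z ^ 12 + (44694/9545 : ℂ) * z ^ 13) * hz + ((-41809/9545 : ℂ) + (-94929/9545 : ℂ) * z + (-41805/1909 : ℂ) * z ^ 2 + (-48447/1909 : ℂ) * z ^ 3 + (-101859/9545 : ℂ) * z ^ 4 + (-44694/9545 : ℂ) * z ^ 5) * hd)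
  · exact absurd htot (by decide)
  · exact absurd htot (by decide)
  · exact absurd htot (by decide)
  · exact one_ne_zero (show (1:ℂ) = 0 by linear_combination ((11231/54740 : ℂ) + (8851/13685 : ℂ) * z + (-13187/27370 : ℂ) * z ^ 2 + (-24741/54740 : ℂ) * z ^ 3 + (37221/54740 : ℂ) * z ^ 4 + (8839/54740 : ℂ) * z ^ 5 + (-20547/27370 : ℂ) * z ^ 6 + (8839/54740 : ℂ) * z ^ 7 + (37221/54740 : ℂ) * z ^ 8 + (-24741/54740 : ℂ) * z ^ 9 + (-13187/27370 : ℂ) * z ^ 10 + (8851/13685 : ℂ) * z ^ 11 + (11231/54740 : ℂ) * z ^ 12 + (-37851/54740 : ℂ) * z ^ 13 + (1801/54740 : ℂ) * z ^ 14 + (16207/27370 : ℂ) * z ^ 15 + (1801/54740 : ℂ) * z ^ 16 + (-37851/54740 : ℂ) * z ^ 17) * hz + ((-43509/54740 : ℂ) + (28933/27370 : ℂ) * z + (5591/2737 : ℂ) * z ^ 2 + (19109/5474 : ℂ) * z ^ 3 + (73901/54740 : ℂ) * z ^ 4 + (37851/54740 : ℂ) * z ^ 5) * hd)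
end

section
/- Let c be the unique real root of the polynomial 8t³ + 8t² + 6t + 1. Then arccos(c)/π is irrational. -/
/-!
If `arccos c = qπ` with `q` rational, then `z = exp (qπi)` is a root of unity, of order `n` say,
with `Re z = c`, and `z` is a root of the rational sextic `X³ p ((X + X⁻¹) / 2)`, where
`p t = 8t³ + 8t² + 6t + 1`. As the `n`-th cyclotomic polynomial is irreducible over `ℚ`, every
primitive `n`-th root of unity `μ` is a root of the sextic too, so `Re μ` is a real root of `p`;
since `p` is strictly increasing, `Re μ = c`. Summing over the primitive roots, `φ(n) c` is minus
the subleading coefficient of the cyclotomic polynomial, an integer. Hence `c` is rational, and by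
Niven's theorem `c ∈ {0, ±1/2, ±1}`, none of which is a root of `p`.
-/

open Polynomial Complex

/-- `X³ · p ((X + X⁻¹) / 2)` for the cubic `p t = 8t³ + 8t² + 6t + 1`. -/
noncomputable def sextic : ℚ[X] :=
  X ^ 6 + 2 * X ^ 5 + 6 * X ^ 4 + 5 * X ^ 3 + 6 * X ^ 2 + 2 * X + 1

lemma eq_of_cubic_eq_zero {x y : ℝ} (hx : 8 * x ^ 3 + 8 * x ^ 2 + 6 * x + 1 = 0)
    (hy : 8 * y ^ 3 + 8 * y ^ 2 + 6 * y + 1 = 0) : x = y := by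
  have hpos : 0 < 8 * (x ^ 2 + x * y + y ^ 2) + 8 * (x + y) + 6 := by
    nlinarith [sq_nonneg (x - y), sq_nonneg (3 * (x + y) + 2)]
  have hfactor : (x - y) * (8 * (x ^ 2 + x * y + y ^ 2) + 8 * (x + y) + 6) = 0 := by
    linear_combination hx - hy
  simpa [hpos.ne', sub_eq_zero] using hfactor

lemma aeval_sextic {μ : ℂ} (hμ : ‖μ‖ = 1) :
    aeval μ sextic = μ ^ 3 * ((8 * μ.re ^ 3 + 8 * μ.re ^ 2 + 6 * μ.re + 1 : ℝ) : ℂ) := by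
  have hμ0 : μ ≠ 0 := norm_ne_zero_iff.mp (by simp [hμ])
  have hre : (μ.re : ℂ) = (μ + μ⁻¹) / 2 := by
    rw [inv_def, normSq_eq_norm_sq, hμ]
    simp [add_conj]
  simp only [sextic, map_add, map_mul, map_pow, map_ofNat, aeval_X, map_one]
  push_cast
  rw [hre]
  field_simp
  ring

lemma aeval_sextic_eq_zero_iff {μ : ℂ} (hμ : ‖μ‖ = 1) :
    aeval μ sextic = 0 ↔ 8 * μ.re ^ 3 + 8 * μ.re ^ 2 + 6 * μ.re + 1 = 0 := by
  have hμ3 : μ ^ 3 ≠ 0 := pow_ne_zero 3 (norm_ne_zero_iff.mp (by simp [hμ]))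
  rw [aeval_sextic hμ, mul_eq_zero, or_iff_right hμ3, ofReal_eq_zero]

lemma IsPrimitiveRoot.aeval_eq_zero {K : Type*} [Field K] [CharZero K] {n : ℕ} (hn : 0 < n)
    {z μ : K} (hz : IsPrimitiveRoot z n) (hμ : IsPrimitiveRoot μ n) {p : ℚ[X]}
    (hp : aeval z p = 0) : aeval μ p = 0 := by
  have : NeZero n := ⟨hn.ne'⟩
  have hdvd : cyclotomic n ℚ ∣ p := cyclotomic_eq_minpoly_rat hz hn ▸ minpoly.dvd ℚ z hp
  refine aeval_eq_zero_of_dvd_aeval_eq_zero hdvd ?_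
  rw [aeval_def, eval₂_eq_eval_map, map_cyclotomic]
  exact (isRoot_cyclotomic_iff.mpr hμ).eq_zero

lemma exists_int_sum_primitiveRoots_eq (K : Type*) [Field K] [CharZero K] [IsAlgClosed K]
    (n : ℕ) : ∃ k : ℤ, ∑ μ ∈ primitiveRoots n K, μ = k := by
  rcases Nat.eq_zero_or_pos n with rfl | hn
  · exact ⟨0, by simp⟩
  have : NeZero n := ⟨hn.ne'⟩
  refine ⟨-(cyclotomic n ℤ).nextCoeff, ?_⟩
  have h := (IsAlgClosed.splits (cyclotomic n K)).nextCoeff_eq_neg_sum_roots_of_monic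
    (cyclotomic.monic n K)
  rw [cyclotomic.roots_eq_primitiveRoots_val, ← map_cyclotomic_int,
    nextCoeff_map Int.cast_injective, Finset.sum_val, eq_intCast] at h
  push_cast
  rw [h, neg_neg]
  rfl

lemma exists_rat_eq_of_forall_primitiveRoots_re_eq {n : ℕ} (hn : 0 < n) {c : ℝ}
    (h : ∀ μ ∈ primitiveRoots n ℂ, μ.re = c) : ∃ q : ℚ, c = q := by
  obtain ⟨k, hk⟩ := exists_int_sum_primitiveRoots_eq ℂ n
  have hsum : (n.totient : ℝ) * c = k := by
    have := congrArg re hk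
    rwa [re_sum, Finset.sum_congr rfl h, Finset.sum_const, card_primitiveRoots, nsmul_eq_mul,
      intCast_re] at this
  have htot : (n.totient : ℝ) ≠ 0 := by exact_mod_cast (Nat.totient_pos.mpr hn).ne'
  exact ⟨k / n.totient, by push_cast; field_simp; linarith⟩

theorem stmt_3 (c : ℝ) (hc : 8 * c ^ 3 + 8 * c ^ 2 + 6 * c + 1 = 0) :
    Irrational (Real.arccos c / Real.pi) := by
  rintro ⟨q, hq⟩
  have hcos : Real.cos (q * Real.pi) = c := by
    rw [hq, div_mul_cancel₀ _ Real.pi_ne_zero]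
    exact Real.cos_arccos (by nlinarith [sq_nonneg (c + 1)]) (by nlinarith [sq_nonneg c])
  set z := exp (q * Real.pi * I)
  have hzre : z.re = c := by
    rw [← hcos, ← exp_ofReal_mul_I_re]
    push_cast
    rfl
  have hz : IsPrimitiveRoot z (orderOf z) := IsPrimitiveRoot.orderOf z
  have hn : 0 < orderOf z := orderOf_pos_iff.mpr <| isOfFinOrder_iff_pow_eq_one.mpr
    ⟨2 * q.den, by positivity, exp_rat_mul_pi_mul_I_pow_two_mul_den q⟩
  have hzP : aeval z sextic = 0 :=
    (aeval_sextic_eq_zero_iff (hz.norm'_eq_one hn.ne')).mpr (hzre ▸ hc)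
  have hre : ∀ μ ∈ primitiveRoots (orderOf z) ℂ, μ.re = c := by
    intro μ hμ
    rw [mem_primitiveRoots hn] at hμ
    have hμP := hz.aeval_eq_zero hn hμ hzP
    exact eq_of_cubic_eq_zero ((aeval_sextic_eq_zero_iff (hμ.norm'_eq_one hn.ne')).mp hμP) hc
  obtain ⟨r, hr⟩ := exists_rat_eq_of_forall_primitiveRoots_re_eq hn hre
  have hniven := niven ⟨q, rfl⟩ ⟨r, hcos.trans hr⟩
  rw [hcos] at hniven
  rcases hniven with rfl | rfl | rfl | rfl | rfl <;> norm_num at hc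
end

section
/- The function φ(u,v) = χ(e^u, e^v), where χ(x,y) = Σ_{(i,j)∈S} x^i y^j for a finite nonempty S ⊆ ℤ² not contained in a line, is strictly convex on ℝ². -/
theorem stmt_11 (S : Finset (ℤ × ℤ)) (hne : S.Nonempty)
    (hline : ¬ ∃ a b : ℝ, (a, b) ≠ ((0 : ℝ), (0 : ℝ)) ∧
      ∀ s ∈ S, a * (s.1 : ℝ) + b * (s.2 : ℝ) = 0) :
    StrictConvexOn ℝ Set.univ
      (fun p : ℝ × ℝ => ∑ s ∈ S, Real.exp ((s.1 : ℝ) * p.1 + (s.2 : ℝ) * p.2)) := by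
  refine ⟨convex_univ, ?_⟩
  intro p _ q _ hpq a b ha hb hab
  have hex : ∃ s ∈ S,
      (s.1 : ℝ) * p.1 + (s.2 : ℝ) * p.2 ≠ (s.1 : ℝ) * q.1 + (s.2 : ℝ) * q.2 := by
    by_contra h
    push_neg at h
    apply hline
    refine ⟨p.1 - q.1, p.2 - q.2, ?_, ?_⟩
    · intro hz
      apply hpq
      have h1 : p.1 - q.1 = 0 := congrArg Prod.fst hz
      have h2 : p.2 - q.2 = 0 := congrArg Prod.snd hz
      exact Prod.ext (by linarith) (by linarith)
    · intro s hs
      have := h s hs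
      nlinarith [this]
  obtain ⟨s0, hs0, hne0⟩ := hex
  simp only [smul_eq_mul, Prod.smul_fst, Prod.smul_snd, Prod.fst_add, Prod.snd_add]
  rw [Finset.mul_sum, Finset.mul_sum, ← Finset.sum_add_distrib]
  apply Finset.sum_lt_sum
  · intro s hs
    have key : (s.1 : ℝ) * (a * p.1 + b * q.1) + (s.2 : ℝ) * (a * p.2 + b * q.2) =
        a * ((s.1 : ℝ) * p.1 + (s.2 : ℝ) * p.2) + b * ((s.1 : ℝ) * q.1 + (s.2 : ℝ) * q.2) := by
      ring
    rw [key]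
    exact convexOn_exp.2 (Set.mem_univ _) (Set.mem_univ _) ha.le hb.le hab
  · refine ⟨s0, hs0, ?_⟩
    have key : (s0.1 : ℝ) * (a * p.1 + b * q.1) + (s0.2 : ℝ) * (a * p.2 + b * q.2) =
        a * ((s0.1 : ℝ) * p.1 + (s0.2 : ℝ) * p.2) + b * ((s0.1 : ℝ) * q.1 + (s0.2 : ℝ) * q.2) := by
      ring
    rw [key]
    exact strictConvexOn_exp.2 (Set.mem_univ _) (Set.mem_univ _) hne0 ha hb hab
end

section
/- Let x₀, y₀ > 0 satisfy x₀² + x₀²y₀ - y₀ = 0 and y₀² - x₀ - 1 = 0. Then ρ = 1/x₀ + 1/y₀ + x₀ + y₀ + x₀/y₀ satisfies ρ³ + ρ² - 18ρ - 43 = 0. -/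
theorem stmt_12 (x₀ y₀ : ℝ) (hx : 0 < x₀) (hy : 0 < y₀)
    (h1 : x₀ ^ 2 + x₀ ^ 2 * y₀ - y₀ = 0) (h2 : y₀ ^ 2 - x₀ - 1 = 0) :
    (1 / x₀ + 1 / y₀ + x₀ + y₀ + x₀ / y₀) ^ 3 +
      (1 / x₀ + 1 / y₀ + x₀ + y₀ + x₀ / y₀) ^ 2 -
      18 * (1 / x₀ + 1 / y₀ + x₀ + y₀ + x₀ / y₀) - 43 = 0 := by
  have hx2 : x₀ - y₀ ^ 2 + 1 = 0 := by linarith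
  have hy1 : 1 < y₀ := by nlinarith
  have hfac : (y₀ ^ 3 - y₀ - 1) * (y₀ ^ 2 + y₀ - 1) = 0 := by
    linear_combination h1 + (1 + y₀) * (x₀ + y₀ ^ 2 - 1) * h2
  have hc : y₀ ^ 3 - y₀ - 1 = 0 := by
    rcases mul_eq_zero.mp hfac with h | h
    · exact h
    · nlinarith
  have hyx : y₀ * x₀ = 1 := by nlinarith [hc, hx2]
  have hix : 1 / x₀ = y₀ := by
    field_simp
    linarith [hyx]
  have hiy : 1 / y₀ = x₀ := by
    field_simp
    linarith [hyx]
  have hxy : x₀ / y₀ = x₀ ^ 2 := by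
    rw [div_eq_iff (ne_of_gt hy)]
    nlinarith [hyx]
  rw [hix, hiy, hxy]
  linear_combination ((-18) + (-2)*y₀ + (-6)*y₀^2 + (-2)*y₀^3 + 11*y₀^4 + 6*y₀^5 + (-1)*y₀^6 + 6*y₀^7 + y₀^8 + y₀^10 + (-18)*x₀ + 10*x₀*y₀ + 12*x₀*y₀^2 + 12*x₀*y₀^3 + x₀*y₀^4 + 6*x₀*y₀^5 + 2*x₀*y₀^6 + x₀*y₀^8 + 4*x₀^2 + 18*x₀^2*y₀ + 4*x₀^2*y₀^2 + 6*x₀^2*y₀^3 + 3*x₀^2*y₀^4 + x₀^2*y₀^6 + 8*x₀^3 + 6*x₀^3*y₀ + 4*x₀^3*y₀^2 + x₀^3*y₀^4 + 5*x₀^4 + x₀^4*y₀^2 + x₀^5) * hx2 + (25 + 9*y₀ + (-1)*y₀^2 + 18*y₀^3 + 8*y₀^4 + (-1)*y₀^5 + 7*y₀^6 + y₀^7 + y₀^9) * hc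
end

section
/- Let x₀, y₀ > 0 satisfy x₀² + x₀²y₀ - y₀ = 0 and y₀² = x₀ + 1, and let c = (∂²χ/∂x∂y)/√((∂²χ/∂x²)(∂²χ/∂y²)) evaluated at (x₀,y₀), where χ(x,y) = 1/x + 1/y + x + y + x/y. Then 8c³ + 8c² + 6c + 1 = 0. -/
theorem stmt_14 (x₀ y₀ : ℝ) (hx : 0 < x₀) (hy : 0 < y₀)
    (h1 : x₀ ^ 2 + x₀ ^ 2 * y₀ - y₀ = 0) (h2 : y₀ ^ 2 = x₀ + 1)
    (c : ℝ)
    (hc : c = (-1 / y₀ ^ 2) /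
      Real.sqrt ((2 / x₀ ^ 3) * (2 / y₀ ^ 3 + 2 * x₀ / y₀ ^ 3))) :
    8 * c ^ 3 + 8 * c ^ 2 + 6 * c + 1 = 0 := by
  have hx1 : x₀ = y₀ ^ 2 - 1 := by linarith
  subst hx1
  set A : ℝ := (2 / (y₀ ^ 2 - 1) ^ 3) * (2 / y₀ ^ 3 + 2 * (y₀ ^ 2 - 1) / y₀ ^ 3) with hA
  have hxne : (y₀ ^ 2 - 1) ≠ 0 := ne_of_gt hx
  have hyne : y₀ ≠ 0 := ne_of_gt hy
  have hApos : 0 < A := by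
    rw [hA]
    have h3 : 0 < (y₀ ^ 2 - 1) ^ 3 := pow_pos hx 3
    have h4 : 0 < y₀ ^ 3 := pow_pos hy 3
    have : 0 < 2 / y₀ ^ 3 + 2 * (y₀ ^ 2 - 1) / y₀ ^ 3 := by positivity
    positivity
  have hsq : Real.sqrt A ^ 2 = A := Real.sq_sqrt hApos.le
  have hspos : 0 < Real.sqrt A := Real.sqrt_pos.mpr hApos
  have hcneg : c < 0 := by
    rw [hc]
    apply div_neg_of_neg_of_pos _ hspos
    have : 0 < y₀ ^ 2 := by positivity
    simp only [neg_div]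
    exact neg_neg_iff_pos.mpr (by positivity)
  -- the cubic for y₀
  have hP : (y₀ ^ 3 - y₀ - 1) * (y₀ ^ 2 + y₀ - 1) = 0 := by linear_combination h1
  have hfac2 : 0 < y₀ ^ 2 + y₀ - 1 := by nlinarith
  have hy3 : y₀ ^ 3 - y₀ - 1 = 0 := by
    rcases mul_eq_zero.mp hP with h | h
    · exact h
    · exact absurd h (ne_of_gt hfac2)
  -- c² in closed form (fraction-free)
  have hr : 4 * y₀ ^ 3 * c ^ 2 = (y₀ ^ 2 - 1) ^ 3 := by
    rw [hc, div_pow, hsq, hA]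
    field_simp
    ring
  have hc4 : 16 * y₀ ^ 6 * c ^ 4 = (y₀ ^ 2 - 1) ^ 6 := by
    linear_combination (4 * y₀ ^ 3 * c ^ 2 + (y₀ ^ 2 - 1) ^ 3) * hr
  have hc6 : 64 * y₀ ^ 9 * c ^ 6 = (y₀ ^ 2 - 1) ^ 9 := by
    linear_combination (16 * y₀ ^ 6 * c ^ 4 + 4 * y₀ ^ 3 * c ^ 2 * (y₀ ^ 2 - 1) ^ 3 +
      (y₀ ^ 2 - 1) ^ 6) * hr
  have hbig : y₀ ^ 9 * ((8 * c ^ 3 + 8 * c ^ 2 + 6 * c + 1) *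
      (-8 * c ^ 3 + 8 * c ^ 2 - 6 * c + 1)) = 0 := by
    linear_combination (-1 : ℝ) * hc6 + (-2 * y₀ ^ 3) * hc4 + (-5 * y₀ ^ 6) * hr +
      (-(1 - y₀ - 8 * y₀ ^ 2 + 7 * y₀ ^ 3 + 28 * y₀ ^ 4 - 24 * y₀ ^ 5 - 48 * y₀ ^ 6 +
        46 * y₀ ^ 7 + 41 * y₀ ^ 8 - 48 * y₀ ^ 9 - 17 * y₀ ^ 10 + 28 * y₀ ^ 11 +
        3 * y₀ ^ 12 - 8 * y₀ ^ 13 + y₀ ^ 15)) * hy3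
  have hy9 : y₀ ^ 9 ≠ 0 := pow_ne_zero _ hyne
  have hprod : (8 * c ^ 3 + 8 * c ^ 2 + 6 * c + 1) *
      (-8 * c ^ 3 + 8 * c ^ 2 - 6 * c + 1) = 0 := by
    rcases mul_eq_zero.mp hbig with h | h
    · exact absurd h hy9
    · exact h
  have hpos2 : 0 < -8 * c ^ 3 + 8 * c ^ 2 - 6 * c + 1 := by nlinarith [sq_nonneg c]
  rcases mul_eq_zero.mp hprod with h | h
  · exact h
  · exact absurd h (ne_of_gt hpos2)
end
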